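/- For every α > 0, the function w̃(k) = Σ_{m=1}^∞ (1 − cos(k m))/m^{1+α} attains its maximum over [−π, π] exactly at k = ±π, and w̃(π) = Σ_{m odd} 2/m^{1+α} = 2 (1 − 2^{−(1+α)}) ζ(1+α). -/

import Mathlib

open scoped BigOperators

noncomputable section

/-- The dispersion symbol `w̃(k) = Σ_{m=1}^∞ (1 − cos(km))/m^{1+α}`. -/
def wt (α k : ℝ) : ℝ :=
  ∑' m : ℕ, (1 - Real.cos (k * ((m + 1 : ℕ) : ℝ))) / ((m + 1 : ℕ) : ℝ) ^ (1 + α)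

/-- The Riemann zeta function of a real argument `s > 1`, as `Σ_{n=1}^∞ n^{−s}`. -/
def zetaR (s : ℝ) : ℝ := ∑' n : ℕ, 1 / ((n + 1 : ℕ) : ℝ) ^ s

open scoped NNReal ENNReal
open Real MeasureTheory Set



lemma summable_one_div_shift {s : ℝ} (hs : 1 < s) :
    Summable (fun m : ℕ => 1 / ((m + 1 : ℕ) : ℝ) ^ s) :=
  (summable_nat_add_iff 1).mpr (Real.summable_one_div_nat_rpow.mpr hs)

lemma summable_wt (s : ℝ) (hs : 1 < s) (k : ℝ) :
    Summable (fun m : ℕ => (1 - Real.cos (k * ((m + 1 : ℕ) : ℝ))) / ((m + 1 : ℕ) : ℝ) ^ s) := by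
  refine Summable.of_nonneg_of_le (fun m => ?_) (fun m => ?_)
    ((summable_one_div_shift hs).mul_left 2)
  · have h1 : Real.cos (k * ((m + 1 : ℕ) : ℝ)) ≤ 1 := Real.cos_le_one _
    have h2 : (0:ℝ) < ((m + 1 : ℕ) : ℝ) ^ s := by positivity
    exact div_nonneg (by linarith) h2.le
  · have h1 : -1 ≤ Real.cos (k * ((m + 1 : ℕ) : ℝ)) := Real.neg_one_le_cos _
    have h2 : (0:ℝ) < ((m + 1 : ℕ) : ℝ) ^ s := by positivity
    rw [mul_one_div]
    gcongr
    linarith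

lemma hasSum_geom_cos {r : ℝ} (h0 : 0 ≤ r) (h1 : r < 1) (k : ℝ) :
    HasSum (fun m : ℕ => r ^ (m + 1) * Real.cos (k * ((m + 1 : ℕ) : ℝ)))
      ((r * Real.cos k - r ^ 2) / (1 - 2 * r * Real.cos k + r ^ 2)) := by
  set z : ℂ := (r : ℂ) * Complex.exp ((k : ℂ) * Complex.I) with hz
  have hnorm : ‖z‖ < 1 := by
    rw [hz, norm_mul]
    have h2 : ‖Complex.exp ((k : ℂ) * Complex.I)‖ = 1 := Complex.norm_exp_ofReal_mul_I k
    rw [h2, mul_one, Complex.norm_real, Real.norm_eq_abs, abs_of_nonneg h0]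
    exact h1
  have hgeom := (hasSum_geometric_of_norm_lt_one hnorm).mul_left z
  have h' : HasSum (fun m : ℕ => (z * z ^ m).re) ((z * (1 - z)⁻¹).re) :=
    ((Complex.hasSum_iff _ _).mp hgeom).1
  have hzre : z.re = r * Real.cos k := by
    rw [hz, Complex.re_ofReal_mul, Complex.exp_ofReal_mul_I_re]
  have hzim : z.im = r * Real.sin k := by
    rw [hz, Complex.im_ofReal_mul, Complex.exp_ofReal_mul_I_im]
  have hsc := Real.sin_sq_add_cos_sq k
  have hns : Complex.normSq (1 - z) = 1 - 2 * r * Real.cos k + r ^ 2 := by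
    rw [Complex.normSq_apply, Complex.sub_re, Complex.sub_im, Complex.one_re, Complex.one_im,
      hzre, hzim]
    nlinarith [hsc]
  have hre2 : (z * (1 - z)⁻¹).re
      = (r * Real.cos k - r ^ 2) / (1 - 2 * r * Real.cos k + r ^ 2) := by
    rw [← div_eq_mul_inv, Complex.div_re, hns, Complex.sub_re, Complex.sub_im, Complex.one_re,
      Complex.one_im, hzre, hzim, ← add_div]
    have : r * Real.cos k * (1 - r * Real.cos k) + r * Real.sin k * (0 - r * Real.sin k)
        = r * Real.cos k - r ^ 2 := by nlinarith [hsc]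
    rw [this]
  have hfun : ∀ m : ℕ, (z * z ^ m).re = r ^ (m + 1) * Real.cos (k * ((m + 1 : ℕ) : ℝ)) := by
    intro m
    have hpow : z * z ^ m = ((r ^ (m + 1) : ℝ) : ℂ)
        * Complex.exp (((k * ((m + 1 : ℕ) : ℝ) : ℝ)) * Complex.I) := by
      rw [hz]
      rw [show ((r:ℂ) * Complex.exp ((k : ℂ) * Complex.I)) ^ m
          = (r:ℂ) ^ m * (Complex.exp ((k : ℂ) * Complex.I)) ^ m from mul_pow _ _ m]
      rw [← Complex.exp_nat_mul]
      have hexp : ((k * ((m + 1 : ℕ) : ℝ) : ℝ) : ℂ) * Complex.I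
          = (k : ℂ) * Complex.I + (m : ℕ) * ((k : ℂ) * Complex.I) := by push_cast; ring
      rw [hexp, Complex.exp_add]
      push_cast
      ring
    rw [hpow, Complex.re_ofReal_mul, Complex.exp_ofReal_mul_I_re]
  rw [← hre2]
  exact h'.congr_fun fun m => (hfun m).symm

lemma base_integrable {s b : ℝ} (hs : 1 < s) (hb : 0 < b) :
    IntegrableOn (fun t : ℝ => t ^ (s - 1) * Real.exp (-(b * t))) (Ioi 0) := by
  have h := integrableOn_rpow_mul_exp_neg_mul_rpow (p := 1) (s := s - 1) (b := b)
    (by linarith) zero_lt_one hb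
  refine h.congr_fun (fun t _ => ?_) measurableSet_Ioi
  beta_reduce
  rw [Real.rpow_one, neg_mul]

/-- The core comparison: the symbol value at `k` is at most the value at `π`,
strictly unless `cos k = -1`. -/
lemma core {s : ℝ} (hs : 1 < s) (k : ℝ) :
    (∑' m : ℕ, (1 - Real.cos (k * ((m + 1 : ℕ) : ℝ))) / ((m + 1 : ℕ) : ℝ) ^ s)
      ≤ (∑' m : ℕ, (1 - Real.cos (π * ((m + 1 : ℕ) : ℝ))) / ((m + 1 : ℕ) : ℝ) ^ s)
    ∧ (Real.cos k ≠ -1 →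
      (∑' m : ℕ, (1 - Real.cos (k * ((m + 1 : ℕ) : ℝ))) / ((m + 1 : ℕ) : ℝ) ^ s)
        < (∑' m : ℕ, (1 - Real.cos (π * ((m + 1 : ℕ) : ℝ))) / ((m + 1 : ℕ) : ℝ) ^ s)) := by
  have hs0 : (0:ℝ) < s := by linarith
  set c : ℕ → ℝ := fun m =>
    Real.cos (k * ((m + 1 : ℕ) : ℝ)) - Real.cos (π * ((m + 1 : ℕ) : ℝ)) with hc
  set base : ℕ → ℝ → ℝ := fun m t => t ^ (s - 1) * Real.exp (-(((m + 1 : ℕ) : ℝ) * t))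
    with hbase
  set F : ℕ → ℝ → ℝ := fun m t => c m * base m t with hF
  have hb : ∀ m : ℕ, (0:ℝ) < ((m + 1 : ℕ) : ℝ) := fun m => by positivity
  have hcabs : ∀ m, |c m| ≤ 2 := by
    intro m
    have := Real.abs_cos_le_one (k * ((m + 1 : ℕ) : ℝ))
    have := Real.abs_cos_le_one (π * ((m + 1 : ℕ) : ℝ))
    calc |c m| ≤ |Real.cos (k * ((m + 1 : ℕ) : ℝ))| + |Real.cos (π * ((m + 1 : ℕ) : ℝ))| :=
          abs_sub _ _
      _ ≤ 2 := by linarith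
  have hbaseint : ∀ m, IntegrableOn (base m) (Ioi 0) := fun m => base_integrable hs (hb m)
  have hbasenn : ∀ m, ∀ t ∈ Ioi (0:ℝ), 0 ≤ base m t := by
    intro m t ht
    exact mul_nonneg (Real.rpow_nonneg (le_of_lt ht) _) (Real.exp_pos _).le
  have hbaseval : ∀ m, ∫ t in Ioi 0, base m t = (1 / ((m + 1 : ℕ) : ℝ)) ^ s * Real.Gamma s :=
    fun m => Real.integral_rpow_mul_exp_neg_mul_Ioi hs0 (hb m)
  have hFint : ∀ m, Integrable (F m) (volume.restrict (Ioi 0)) := fun m =>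
    (hbaseint m).const_mul _
  have hFval : ∀ m, ∫ t in Ioi 0, F m t
      = Real.Gamma s * (c m / ((m + 1 : ℕ) : ℝ) ^ s) := by
    intro m
    rw [hF]
    simp only
    rw [integral_const_mul, hbaseval m, one_div, Real.inv_rpow (hb m).le]
    ring
  have hFnormval : ∀ m, ∫ t in Ioi 0, ‖F m t‖
      = |c m| * ((1 / ((m + 1 : ℕ) : ℝ)) ^ s * Real.Gamma s) := by
    intro m
    have heq : ∀ t ∈ Ioi (0:ℝ), ‖F m t‖ = |c m| * base m t := by
      intro t ht
      rw [hF]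
      simp only
      rw [Real.norm_eq_abs, abs_mul, abs_of_nonneg (hbasenn m t ht)]
    rw [setIntegral_congr_fun measurableSet_Ioi heq, integral_const_mul, hbaseval m]
  have hsum_norm : Summable fun m => ∫ t in Ioi 0, ‖F m t‖ := by
    refine Summable.of_nonneg_of_le (fun m => ?_) (fun m => ?_)
      ((summable_one_div_shift hs).mul_left (2 * Real.Gamma s))
    · exact integral_nonneg fun t => norm_nonneg _
    · rw [hFnormval m]
      have hG := Real.Gamma_pos_of_pos hs0
      calc |c m| * ((1 / ((m + 1 : ℕ) : ℝ)) ^ s * Real.Gamma s)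
          ≤ 2 * ((1 / ((m + 1 : ℕ) : ℝ)) ^ s * Real.Gamma s) := by
            have h3 : (0:ℝ) ≤ (1 / ((m + 1 : ℕ) : ℝ)) ^ s * Real.Gamma s := by positivity
            exact mul_le_mul_of_nonneg_right (hcabs m) h3
        _ = 2 * Real.Gamma s * (1 / ((m + 1 : ℕ) : ℝ) ^ s) := by
            rw [one_div, Real.inv_rpow (hb m).le]; ring
  have hswap := MeasureTheory.integral_tsum_of_summable_integral_norm hFint hsum_norm
  -- LHS : tsum of integrals
  have hsummk := summable_wt s hs k
  have hsummπ := summable_wt s hs π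
  have hLHS : (∑' m : ℕ, ∫ t in Ioi 0, F m t)
      = Real.Gamma s *
        ((∑' m : ℕ, (1 - Real.cos (π * ((m + 1 : ℕ) : ℝ))) / ((m + 1 : ℕ) : ℝ) ^ s)
          - (∑' m : ℕ, (1 - Real.cos (k * ((m + 1 : ℕ) : ℝ))) / ((m + 1 : ℕ) : ℝ) ^ s)) := by
    rw [show (fun m : ℕ => ∫ t in Ioi 0, F m t)
        = fun m => Real.Gamma s * (c m / ((m + 1 : ℕ) : ℝ) ^ s) from funext hFval]
    rw [tsum_mul_left]
    congr 1
    rw [← Summable.tsum_sub hsummπ hsummk]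
    refine tsum_congr fun m => ?_
    rw [hc]
    ring
  -- pointwise value of the tsum
  have hDpos : ∀ r : ℝ, 0 ≤ r → r < 1 → 0 < 1 - 2 * r * Real.cos k + r ^ 2 := by
    intro r h0 h1
    nlinarith [Real.cos_le_one k, mul_nonneg h0 (sub_nonneg.mpr (Real.cos_le_one k)),
      mul_pos (sub_pos.mpr h1) (sub_pos.mpr h1)]
  set Φ : ℝ → ℝ := fun t => t ^ (s - 1) *
    (Real.exp (-t) * ((1 + Real.cos k) * (1 - Real.exp (-t))) /
      ((1 + Real.exp (-t)) * (1 - 2 * Real.exp (-t) * Real.cos k + Real.exp (-t) ^ 2))) with hΦ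
  have hexplt : ∀ t : ℝ, t ∈ Ioi (0:ℝ) → Real.exp (-t) < 1 := by
    intro t ht
    have : -t < 0 := by simpa using (mem_Ioi.mp ht)
    simpa using Real.exp_lt_one_iff.mpr this
  have hpt : ∀ t ∈ Ioi (0:ℝ), (∑' m, F m t) = Φ t := by
    intro t ht
    have hr0 : 0 < Real.exp (-t) := Real.exp_pos _
    have hr1 : Real.exp (-t) < 1 := hexplt t ht
    have hk := hasSum_geom_cos hr0.le hr1 k
    have hπ2 := hasSum_geom_cos hr0.le hr1 π
    have hsub := (hk.sub hπ2).mul_left (t ^ (s - 1))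
    have hfun : ∀ m : ℕ, F m t
        = t ^ (s-1) * (Real.exp (-t) ^ (m+1) * Real.cos (k * ((m+1:ℕ):ℝ))
          - Real.exp (-t) ^ (m+1) * Real.cos (π * ((m+1:ℕ):ℝ))) := by
      intro m
      have hexp : Real.exp (-(((m + 1 : ℕ) : ℝ) * t)) = Real.exp (-t) ^ (m + 1) := by
        rw [← Real.exp_nat_mul]
        congr 1
        push_cast
        ring
      rw [hF]
      simp only [hbase]
      rw [hexp, hc]
      ring
    have hhs : HasSum (fun m => F m t)
        (t ^ (s - 1) * ((Real.exp (-t) * Real.cos k - Real.exp (-t) ^ 2) /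
            (1 - 2 * Real.exp (-t) * Real.cos k + Real.exp (-t) ^ 2)
          - (Real.exp (-t) * Real.cos π - Real.exp (-t) ^ 2) /
            (1 - 2 * Real.exp (-t) * Real.cos π + Real.exp (-t) ^ 2))) :=
      hsub.congr_fun hfun
    rw [hhs.tsum_eq, hΦ]
    simp only
    congr 1
    have hD := hDpos _ hr0.le hr1
    have h1r : (0:ℝ) < 1 + Real.exp (-t) := by linarith
    rw [Real.cos_pi]
    rw [show (1 : ℝ) - 2 * Real.exp (-t) * (-1) + Real.exp (-t) ^ 2
        = (1 + Real.exp (-t)) ^ 2 from by ring]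
    rw [div_sub_div _ _ hD.ne' (by positivity), div_eq_div_iff (by positivity) (by positivity)]
    ring
  have hnonneg : ∀ t ∈ Ioi (0:ℝ), 0 ≤ ∑' m, F m t := by
    intro t ht
    rw [hpt t ht, hΦ]
    simp only
    have hr0 : 0 < Real.exp (-t) := Real.exp_pos _
    have hr1 : Real.exp (-t) < 1 := hexplt t ht
    have hD := hDpos _ hr0.le hr1
    have hck := Real.neg_one_le_cos k
    apply mul_nonneg (Real.rpow_nonneg (le_of_lt ht) _)
    apply div_nonneg
    · exact mul_nonneg hr0.le (mul_nonneg (by linarith) (by linarith))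
    · exact mul_nonneg (by linarith) hD.le
  have hint_nonneg : 0 ≤ ∫ t in Ioi 0, ∑' m, F m t :=
    setIntegral_nonneg measurableSet_Ioi hnonneg
  have hG := Real.Gamma_pos_of_pos hs0
  have hkey : 0 ≤ Real.Gamma s *
      ((∑' m : ℕ, (1 - Real.cos (π * ((m + 1 : ℕ) : ℝ))) / ((m + 1 : ℕ) : ℝ) ^ s)
        - (∑' m : ℕ, (1 - Real.cos (k * ((m + 1 : ℕ) : ℝ))) / ((m + 1 : ℕ) : ℝ) ^ s)) := by
    rw [← hLHS, hswap]
    exact hint_nonneg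
  constructor
  · nlinarith [hkey, hG]
  · intro hckne
    have hck' : -1 < Real.cos k := lt_of_le_of_ne (Real.neg_one_le_cos k) (Ne.symm hckne)
    -- integrability of the tsum
    have hΦmeas : Measurable Φ := by
      rw [hΦ]
      fun_prop
    have hgmeas : AEStronglyMeasurable (fun t => ∑' m, F m t) (volume.restrict (Ioi 0)) := by
      refine hΦmeas.aestronglyMeasurable.congr ?_
      exact (ae_restrict_iff' measurableSet_Ioi).mpr
        (Filter.Eventually.of_forall fun t ht => (hpt t ht).symm)
    have hbound : ∫⁻ t, ‖(∑' m, F m t)‖₊ ∂(volume.restrict (Ioi 0))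
        ≤ ∑' m, ∫⁻ t, ‖F m t‖₊ ∂(volume.restrict (Ioi 0)) := by
      rw [← lintegral_tsum (fun m => (hFint m).aestronglyMeasurable.aemeasurable.nnnorm.coe_nnreal_ennreal)]
      refine lintegral_mono_ae ((ae_restrict_iff' measurableSet_Ioi).mpr
        (Filter.Eventually.of_forall fun t ht => ?_))
      have hr0 : 0 < Real.exp (-t) := Real.exp_pos _
      have hr1 : Real.exp (-t) < 1 := hexplt t ht
      have ht' : 0 < t := mem_Ioi.mp ht
      have hsummt : Summable fun m => ‖F m t‖₊ := by
        rw [← NNReal.summable_coe]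
        have hgeo : Summable fun m : ℕ =>
            2 * t ^ (s-1) * Real.exp (-t) ^ (m+1) := by
          refine ((summable_geometric_of_lt_one hr0.le hr1).mul_left
            (2 * t ^ (s-1) * Real.exp (-t))).congr fun m => ?_
          rw [pow_succ]
          ring
        refine Summable.of_nonneg_of_le (fun m => norm_nonneg _) (fun m => ?_) hgeo
        have hexp : Real.exp (-(((m + 1 : ℕ) : ℝ) * t)) = Real.exp (-t) ^ (m + 1) := by
          rw [← Real.exp_nat_mul]
          congr 1
          push_cast
          ring
        have hb2 := hbasenn m t ht
        simp only [coe_nnnorm, hF, Real.norm_eq_abs, abs_mul]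
        rw [abs_of_nonneg hb2]
        simp only [hbase]
        rw [hexp]
        calc |c m| * (t ^ (s-1) * Real.exp (-t) ^ (m+1))
            ≤ 2 * (t ^ (s-1) * Real.exp (-t) ^ (m+1)) :=
              mul_le_mul_of_nonneg_right (hcabs m)
                (mul_nonneg (Real.rpow_nonneg ht'.le _) (pow_nonneg hr0.le _))
          _ = 2 * t ^ (s-1) * Real.exp (-t) ^ (m+1) := by ring
      calc (‖(∑' m, F m t)‖₊ : ℝ≥0∞) ≤ (((∑' m, ‖F m t‖₊ : ℝ≥0)) : ℝ≥0∞) := by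
            exact_mod_cast nnnorm_tsum_le hsummt
        _ = ∑' m, (‖F m t‖₊ : ℝ≥0∞) := ENNReal.coe_tsum hsummt
    have hfin2 : (∑' m, ∫⁻ t, ‖F m t‖₊ ∂(volume.restrict (Ioi 0))) < ⊤ := by
      have heq : ∀ m, ∫⁻ t, ‖F m t‖₊ ∂(volume.restrict (Ioi 0))
          = ENNReal.ofReal (∫ t in Ioi 0, ‖F m t‖) := fun m =>
        (ofReal_integral_norm_eq_lintegral_enorm (hFint m)).symm
      rw [tsum_congr heq,
        ← ENNReal.ofReal_tsum_of_nonneg (fun m => integral_nonneg fun t => norm_nonneg _)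
          hsum_norm]
      exact ENNReal.ofReal_lt_top
    have hgint : Integrable (fun t => ∑' m, F m t) (volume.restrict (Ioi 0)) :=
      ⟨hgmeas, lt_of_le_of_lt hbound hfin2⟩
    have hpos : 0 < ∫ t in Ioi 0, ∑' m, F m t := by
      rw [integral_pos_iff_support_of_nonneg_ae
        ((ae_restrict_iff' measurableSet_Ioi).mpr (Filter.Eventually.of_forall hnonneg)) hgint]
      have hsub : Ioi (0:ℝ) ⊆ Function.support fun t => ∑' m, F m t := by
        intro t ht
        have hr0 : 0 < Real.exp (-t) := Real.exp_pos _
        have hr1 : Real.exp (-t) < 1 := hexplt t ht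
        have hD := hDpos _ hr0.le hr1
        have hΦpos : 0 < Φ t := by
          rw [hΦ]
          simp only
          apply mul_pos (Real.rpow_pos_of_pos (mem_Ioi.mp ht) _)
          apply div_pos
          · exact mul_pos hr0 (mul_pos (by linarith) (by linarith))
          · exact mul_pos (by linarith) hD
        simp only [Function.mem_support, hpt t ht]
        exact ne_of_gt hΦpos
      rw [Measure.restrict_apply' measurableSet_Ioi, Set.inter_eq_right.mpr hsub,
        Real.volume_Ioi]
      simp
    have hkey2 : 0 < Real.Gamma s *
        ((∑' m : ℕ, (1 - Real.cos (π * ((m + 1 : ℕ) : ℝ))) / ((m + 1 : ℕ) : ℝ) ^ s)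
          - (∑' m : ℕ, (1 - Real.cos (k * ((m + 1 : ℕ) : ℝ))) / ((m + 1 : ℕ) : ℝ) ^ s)) := by
      rw [← hLHS, hswap]
      exact hpos
    nlinarith [hkey2, hG]



lemma cos_pi_nat (n : ℕ) : Real.cos (π * n) = (-1 : ℝ) ^ n := by
  simpa [mul_comm] using Real.cos_nat_mul_pi_sub (0:ℝ) n

lemma summable_odd_inv (s : ℝ) (hs : 1 < s) :
    Summable (fun m : ℕ => 1 / ((2 * m + 1 : ℕ) : ℝ) ^ s) := by
  refine Summable.of_nonneg_of_le (fun m => by positivity) (fun m => ?_)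
    (summable_one_div_shift hs)
  have h1 : ((m + 1 : ℕ) : ℝ) ^ s ≤ ((2 * m + 1 : ℕ) : ℝ) ^ s := by
    apply Real.rpow_le_rpow (by positivity) ?_ (by linarith)
    exact_mod_cast by omega
  exact one_div_le_one_div_of_le (by positivity) h1

lemma tsum_value_pi (s : ℝ) (hs : 1 < s) :
    (∑' m : ℕ, (1 - Real.cos (π * ((m + 1 : ℕ) : ℝ))) / ((m + 1 : ℕ) : ℝ) ^ s)
      = ∑' m : ℕ, 2 / ((2 * m + 1 : ℕ) : ℝ) ^ s := by
  set f : ℕ → ℝ := fun m => (1 - Real.cos (π * ((m + 1 : ℕ) : ℝ))) / ((m + 1 : ℕ) : ℝ) ^ s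
    with hf
  have hfe : ∀ n : ℕ, f (2 * n) = 2 / ((2 * n + 1 : ℕ) : ℝ) ^ s := by
    intro n
    rw [hf]
    simp only
    rw [cos_pi_nat (2 * n + 1)]
    have : ((-1 : ℝ)) ^ (2 * n + 1) = -1 := by
      rw [pow_succ, pow_mul]
      norm_num
    rw [this]
    norm_num
  have hfo : ∀ n : ℕ, f (2 * n + 1) = 0 := by
    intro n
    rw [hf]
    simp only
    rw [cos_pi_nat (2 * n + 1 + 1)]
    have : ((-1 : ℝ)) ^ (2 * n + 1 + 1) = 1 := by
      rw [show 2 * n + 1 + 1 = 2 * (n + 1) from by ring, pow_mul]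
      norm_num
    rw [this]
    norm_num
  have he : Summable fun n => f (2 * n) := by
    refine ((summable_odd_inv s hs).mul_left 2).congr fun n => ?_
    rw [hfe n]
    ring
  have ho : Summable fun n => f (2 * n + 1) := by
    refine summable_zero.congr fun n => ?_
    rw [hfo n]
  rw [← tsum_even_add_odd he ho, tsum_congr hfe, tsum_congr hfo]
  simp [mul_one_div]

lemma tsum_odd_zeta (s : ℝ) (hs : 1 < s) :
    (∑' m : ℕ, 2 / ((2 * m + 1 : ℕ) : ℝ) ^ s)
      = 2 * (1 - (2:ℝ) ^ (-s)) * (∑' n : ℕ, 1 / ((n + 1 : ℕ) : ℝ) ^ s) := by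
  set Z := ∑' n : ℕ, 1 / ((n + 1 : ℕ) : ℝ) ^ s with hZ
  set g : ℕ → ℝ := fun n => 1 / ((n + 1 : ℕ) : ℝ) ^ s with hg
  have hge : ∀ n : ℕ, g (2 * n) = 1 / ((2 * n + 1 : ℕ) : ℝ) ^ s := fun n => rfl
  have hgo : ∀ n : ℕ, g (2 * n + 1) = (2:ℝ) ^ (-s) * (1 / ((n + 1 : ℕ) : ℝ) ^ s) := by
    intro n
    rw [hg]
    simp only
    have h1 : ((2 * n + 1 + 1 : ℕ) : ℝ) = 2 * ((n + 1 : ℕ) : ℝ) := by push_cast; ring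
    rw [h1, Real.mul_rpow (by norm_num) (by positivity), Real.rpow_neg (by norm_num)]
    rw [one_div, mul_inv, one_div]
  have he : Summable fun n => g (2 * n) :=
    (summable_odd_inv s hs).congr fun n => (hge n).symm
  have ho : Summable fun n => g (2 * n + 1) :=
    (((summable_one_div_shift hs)).mul_left ((2:ℝ) ^ (-s))).congr fun n => (hgo n).symm
  have hsplit := tsum_even_add_odd he ho
  have hodds : (∑' n : ℕ, g (2 * n + 1)) = (2:ℝ) ^ (-s) * Z := by
    rw [tsum_congr hgo, tsum_mul_left]
  have hevens : (∑' n : ℕ, g (2 * n)) = ∑' n : ℕ, 1 / ((2 * n + 1 : ℕ) : ℝ) ^ s :=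
    tsum_congr hge
  have h2 : (∑' m : ℕ, 2 / ((2 * m + 1 : ℕ) : ℝ) ^ s)
      = 2 * ∑' n : ℕ, 1 / ((2 * n + 1 : ℕ) : ℝ) ^ s := by
    rw [← tsum_mul_left]
    exact tsum_congr fun m => by rw [mul_one_div]
  rw [h2]
  have h3 : (∑' n : ℕ, 1 / ((2 * n + 1 : ℕ) : ℝ) ^ s) = Z - (2:ℝ) ^ (-s) * Z := by
    rw [← hevens]
    linarith [hsplit]
  rw [h3]
  ring

lemma eq_pi_of_cos {k : ℝ} (hk : k ∈ Icc (-π) π) (h : Real.cos k = -1) :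
    k = π ∨ k = -π := by
  obtain ⟨n, hn⟩ := Real.cos_eq_neg_one_iff.mp h
  have hπ := Real.pi_pos
  obtain ⟨h1, h2⟩ := hk
  rw [← hn] at h1 h2
  have hn1 : (-1 : ℝ) ≤ (n : ℝ) := by nlinarith
  have hn0 : (n : ℝ) ≤ 0 := by nlinarith
  have : n = -1 ∨ n = 0 := by
    have ha : (-1 : ℤ) ≤ n := by exact_mod_cast hn1
    have hb : n ≤ 0 := by exact_mod_cast hn0
    omega
  rcases this with h' | h' <;> rw [h'] at hn
  · right; rw [← hn]; push_cast; ring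
  · left; rw [← hn]; push_cast; ring


/-- On `[−π, π]`, `w̃` attains its maximum exactly at `k = ±π`, and
`w̃(π) = Σ_{m odd} 2/m^{1+α} = 2(1 − 2^{−(1+α)}) ζ(1+α)`. -/
theorem wt_max_at_pi (α : ℝ) (hα : 0 < α) :
    (∀ k ∈ Set.Icc (-Real.pi) Real.pi, wt α k ≤ wt α Real.pi) ∧
    (∀ k ∈ Set.Icc (-Real.pi) Real.pi, wt α k = wt α Real.pi →
      k = Real.pi ∨ k = -Real.pi) ∧
    wt α Real.pi = ∑' m : ℕ, 2 / ((2 * m + 1 : ℕ) : ℝ) ^ (1 + α) ∧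
    wt α Real.pi = 2 * (1 - (2 : ℝ) ^ (-(1 + α))) * zetaR (1 + α) := by
  have hs : (1:ℝ) < 1 + α := by linarith
  have hwt : ∀ k : ℝ, wt α k
      = ∑' m : ℕ, (1 - Real.cos (k * ((m + 1 : ℕ) : ℝ))) / ((m + 1 : ℕ) : ℝ) ^ (1 + α) :=
    fun k => rfl
  refine ⟨fun k _ => (core hs k).1, ?_, ?_, ?_⟩
  · intro k hk hke
    by_contra hcon
    push_neg at hcon
    have hcos : Real.cos k ≠ -1 := by
      intro h
      rcases eq_pi_of_cos hk h with h' | h'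
      · exact hcon.1 h'
      · exact hcon.2 h'
    have hlt := (core hs k).2 hcos
    rw [hwt k, hwt π] at hke
    exact absurd hke (ne_of_lt hlt)
  · rw [hwt π]
    exact tsum_value_pi (1 + α) hs
  · rw [hwt π, tsum_value_pi (1 + α) hs, tsum_odd_zeta (1 + α) hs]
    rfl
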